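/- Let 0 < p < ∞ and let w be a log-convex weight on [0, ∞). Then there is a constant C > 0 such that w(r) ≤ C (r+1) w̃_p(r) for all 0 ≤ r < ∞. -/

import Mathlib

open Complex MeasureTheory Real Set Filter
open scoped ENNReal Topology

noncomputable section

/-- The domain: disk of radius `rmax` (`rmax = 1` is the unit disk, `rmax = ⊤` is ℂ). -/
def Dom (rmax : ℝ≥0∞) : Set ℂ := {z : ℂ | ENNReal.ofReal ‖z‖ < rmax}

/-- The integral mean `M_p(f, r)` for `0 < p < ∞`. -/
def Mp (p : ℝ) (f : ℂ → ℂ) (r : ℝ) : ℝ :=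
  ((1 / (2 * π)) * ∫ θ in (0:ℝ)..(2 * π), ‖f ((r : ℂ) * Complex.exp ((θ : ℂ) * Complex.I))‖ ^ p)
    ^ (1 / p)

/-- The sup mean `M_∞(f, r)`. -/
def Minf (f : ℂ → ℂ) (r : ℝ) : ℝ :=
  ⨆ θ : ℝ, ‖f ((r : ℂ) * Complex.exp ((θ : ℂ) * Complex.I))‖

/-- A weight on `[0, rmax)`: positive, non-decreasing, continuous, unbounded. -/
structure IsWeight (rmax : ℝ≥0∞) (w : ℝ → ℝ) : Prop where
  pos : ∀ r, 0 ≤ r → ENNReal.ofReal r < rmax → 0 < w r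
  mono : ∀ r s, 0 ≤ r → r ≤ s → ENNReal.ofReal s < rmax → w r ≤ w s
  cont : ContinuousOn w {r : ℝ | 0 ≤ r ∧ ENNReal.ofReal r < rmax}
  unbdd : ∀ M : ℝ, ∃ r, 0 ≤ r ∧ ENNReal.ofReal r < rmax ∧ M < w r

/-- `log w(e^x)` is convex on the appropriate interval. -/
def LogConvexOn (rmax : ℝ≥0∞) (w : ℝ → ℝ) : Prop :=
  ConvexOn ℝ {x : ℝ | ENNReal.ofReal (Real.exp x) < rmax}
    (fun x => Real.log (w (Real.exp x)))

/-- The integration operator `J f(z) = ∫₀^z f(ζ) dζ` (along the segment from 0 to z). -/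
def Jop (f : ℂ → ℂ) (z : ℂ) : ℂ := ∫ t in (0:ℝ)..1, z * f ((t : ℂ) * z)

/-- The associated weight `w̃` (for `p = ∞`). -/
def assocInf (rmax : ℝ≥0∞) (w : ℝ → ℝ) (t : ℝ) : ℝ :=
  sSup {m : ℝ | ∃ f : ℂ → ℂ, DifferentiableOn ℂ f (Dom rmax) ∧
    (∀ r, 0 ≤ r → ENNReal.ofReal r < rmax → Minf f r ≤ w r) ∧ m = Minf f t}

/-- The `p`-associated weight `w̃_p` for `0 < p < ∞`. -/
def assocP (rmax : ℝ≥0∞) (p : ℝ) (w : ℝ → ℝ) (t : ℝ) : ℝ :=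
  sSup {m : ℝ | ∃ f : ℂ → ℂ, DifferentiableOn ℂ f (Dom rmax) ∧
    (∀ r, 0 ≤ r → ENNReal.ofReal r < rmax → Mp p f r ≤ w r) ∧ m = Mp p f t}

/-!
Since `φ(t) = log w(eᵗ)` is convex and non-decreasing, it has a supporting line of slope `k ≥ 0`
at `t₀ = log r`, i.e. `w(s) ≥ w(r) (s/r)ᵏ` for all `s > 0`. Rounding `k` down to `n = ⌊k⌋` and
shrinking the constant by the factor `w(0)/w(1)`, so that it is also at most `w(0)` (which handles
`s ≤ 1`), gives a monomial `c zⁿ` with `M_p(c zⁿ, s) = c sⁿ ≤ w(s)` for all `s ≥ 0`, hence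
`c rⁿ ≤ w̃_p(r)`. The rounding costs at most one power of `r`: `w(r) ≤ (w(1)/w(0)) (r + 1) c rⁿ`.
-/

lemma Mp_eq_of_forall_norm_eq {p : ℝ} (hp : p ≠ 0) {f : ℂ → ℂ} {t a : ℝ} (ha : 0 ≤ a)
    (hf : ∀ θ : ℝ, ‖f ((t : ℂ) * Complex.exp ((θ : ℂ) * Complex.I))‖ = a) :
    Mp p f t = a := by
  have h2π : (2 * π) ≠ 0 := by positivity
  simp only [Mp, hf, intervalIntegral.integral_const, smul_eq_mul, sub_zero]
  rw [← mul_assoc, one_div_mul_cancel h2π, one_mul, one_div, Real.rpow_rpow_inv ha hp]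

lemma Mp_const_mul_pow {p : ℝ} (hp : p ≠ 0) (c : ℂ) (n : ℕ) {t : ℝ} (ht : 0 ≤ t) :
    Mp p (fun z => c * z ^ n) t = ‖c‖ * t ^ n :=
  Mp_eq_of_forall_norm_eq hp (by positivity) fun θ => by
    simp [Complex.norm_exp_ofReal_mul_I, abs_of_nonneg ht]

lemma Mp_le_assocP {p : ℝ} {w : ℝ → ℝ} {f : ℂ → ℂ} (hf : Differentiable ℂ f)
    (hfw : ∀ s, 0 ≤ s → Mp p f s ≤ w s) {r : ℝ} (hr : 0 ≤ r) :
    Mp p f r ≤ assocP ⊤ p w r := by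
  refine le_csSup ⟨w r, ?_⟩ ⟨f, hf.differentiableOn, fun s hs _ => hfw s hs, rfl⟩
  rintro m ⟨g, -, hgw, rfl⟩
  exact hgw r hr ENNReal.ofReal_lt_top

lemma const_mul_pow_le_assocP {p : ℝ} (hp : p ≠ 0) {w : ℝ → ℝ} {c : ℝ} (hc : 0 ≤ c) {n : ℕ}
    (hcw : ∀ s, 0 ≤ s → c * s ^ n ≤ w s) {r : ℝ} (hr : 0 ≤ r) :
    c * r ^ n ≤ assocP ⊤ p w r := by
  have hMp : ∀ s, 0 ≤ s → Mp p (fun z => (c : ℂ) * z ^ n) s = c * s ^ n := fun s hs => by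
    rw [Mp_const_mul_pow hp _ _ hs, Complex.norm_of_nonneg hc]
  rw [← hMp r hr]
  exact Mp_le_assocP (by fun_prop) (fun s hs => (hMp s hs).trans_le (hcw s hs)) hr

lemma ConvexOn.add_rightDeriv_mul_sub_le {φ : ℝ → ℝ} (hφ : ConvexOn ℝ univ φ) (t₀ t : ℝ) :
    φ t₀ + derivWithin φ (Ioi t₀) t₀ * (t - t₀) ≤ φ t := by
  have ht₀ : t₀ ∈ interior univ := by simp
  rcases lt_trichotomy t t₀ with h | rfl | h
  · have hslope := (hφ.slope_le_leftDeriv_of_mem_interior (mem_univ t) ht₀ h).trans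
      (hφ.leftDeriv_le_rightDeriv_of_mem_interior ht₀)
    rw [slope_def_field, div_le_iff₀ (sub_pos.2 h)] at hslope
    linarith
  · simp
  · have hslope := hφ.rightDeriv_le_slope_of_mem_interior ht₀ (mem_univ t) h
    rw [slope_def_field, le_div_iff₀ (sub_pos.2 h)] at hslope
    linarith

lemma Real.rpow_le_add_one_mul_pow_floor {r k : ℝ} (hr : 0 < r) (hk : 0 ≤ k) :
    r ^ k ≤ (r + 1) * r ^ ⌊k⌋₊ := by
  have hfrac : r ^ (k - ⌊k⌋₊) ≤ r + 1 := by
    rcases le_total r 1 with hr1 | hr1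
    · linarith [Real.rpow_le_one hr.le hr1 (sub_nonneg.2 (Nat.floor_le hk))]
    · have := Real.rpow_le_rpow_of_exponent_le hr1
        (show k - ⌊k⌋₊ ≤ 1 by linarith [Nat.lt_floor_add_one k])
      rw [Real.rpow_one] at this
      linarith
  calc r ^ k = r ^ (k - ⌊k⌋₊) * r ^ ⌊k⌋₊ := by
        rw [← Real.rpow_natCast, ← Real.rpow_add hr, sub_add_cancel]
    _ ≤ (r + 1) * r ^ ⌊k⌋₊ := by gcongr

section Weight

variable {w : ℝ → ℝ}

lemma IsWeight.pos_of_nonneg (hw : IsWeight ⊤ w) {s : ℝ} (hs : 0 ≤ s) : 0 < w s :=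
  hw.pos s hs ENNReal.ofReal_lt_top

lemma IsWeight.mono_of_nonneg (hw : IsWeight ⊤ w) {s t : ℝ} (hs : 0 ≤ s) (hst : s ≤ t) :
    w s ≤ w t :=
  hw.mono s t hs hst ENNReal.ofReal_lt_top

lemma IsWeight.monotone_log_comp_exp (hw : IsWeight ⊤ w) :
    Monotone fun x => Real.log (w (Real.exp x)) := fun x _ hxy =>
  Real.log_le_log (hw.pos_of_nonneg (exp_pos x).le)
    (hw.mono_of_nonneg (exp_pos x).le (exp_le_exp.2 hxy))

lemma LogConvexOn.convexOn_univ (hlc : LogConvexOn ⊤ w) :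
    ConvexOn ℝ univ fun x => Real.log (w (Real.exp x)) := by
  simpa [LogConvexOn] using hlc

lemma LogConvexOn.exists_rpow_minorant (hlc : LogConvexOn ⊤ w) (hw : IsWeight ⊤ w) {r : ℝ}
    (hr : 0 < r) : ∃ k : ℝ, 0 ≤ k ∧ ∀ s, 0 < s → w r / r ^ k * s ^ k ≤ w s := by
  refine ⟨derivWithin (fun x => Real.log (w (Real.exp x))) (Ioi (Real.log r)) (Real.log r),
    (hw.monotone_log_comp_exp.monotoneOn _).derivWithin_nonneg, fun s hs => ?_⟩
  have h := hlc.convexOn_univ.add_rightDeriv_mul_sub_le (Real.log r) (Real.log s)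
  simp only [Real.exp_log hr, Real.exp_log hs] at h
  have hwr := hw.pos_of_nonneg hr.le
  rw [← Real.log_le_log_iff (by positivity) (hw.pos_of_nonneg hs.le),
    Real.log_mul (by positivity) (by positivity), Real.log_div hwr.ne' (by positivity),
    Real.log_rpow hr, Real.log_rpow hs]
  linarith

lemma IsWeight.monomial_le_of_rpow_le (hw : IsWeight ⊤ w) {a k : ℝ} (ha : 0 ≤ a) (hk : 0 ≤ k)
    (haw : ∀ s, 0 < s → a * s ^ k ≤ w s) {s : ℝ} (hs : 0 ≤ s) :
    a * (w 0 / w 1) * s ^ ⌊k⌋₊ ≤ w s := by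
  have hw01 : w 0 ≤ w 1 := hw.mono_of_nonneg le_rfl zero_le_one
  have hw1 := hw.pos_of_nonneg zero_le_one
  have hw01' : 0 ≤ w 0 / w 1 := div_nonneg (hw.pos_of_nonneg le_rfl).le hw1.le
  rcases le_total s 1 with hs1 | hs1
  · calc a * (w 0 / w 1) * s ^ ⌊k⌋₊ ≤ a * (w 0 / w 1) :=
          mul_le_of_le_one_right (mul_nonneg ha hw01') (pow_le_one₀ hs hs1)
      _ ≤ w 1 * (w 0 / w 1) := mul_le_mul_of_nonneg_right (by simpa using haw 1 one_pos) hw01'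
      _ = w 0 := mul_div_cancel₀ _ hw1.ne'
      _ ≤ w s := hw.mono_of_nonneg le_rfl hs
  · calc a * (w 0 / w 1) * s ^ ⌊k⌋₊ ≤ a * s ^ ⌊k⌋₊ := by
          gcongr
          exact mul_le_of_le_one_right ha (div_le_one_of_le₀ hw01 hw1.le)
      _ ≤ a * s ^ k := by
          gcongr
          rw [← Real.rpow_natCast]
          exact Real.rpow_le_rpow_of_exponent_le hs1 (Nat.floor_le hk)
      _ ≤ w s := haw s (by linarith)

lemma LogConvexOn.exists_monomial_minorant (hlc : LogConvexOn ⊤ w) (hw : IsWeight ⊤ w) {r : ℝ}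
    (hr : 0 ≤ r) : ∃ (n : ℕ) (c : ℝ), 0 ≤ c ∧ (∀ s, 0 ≤ s → c * s ^ n ≤ w s) ∧
      w r ≤ w 1 / w 0 * (r + 1) * (c * r ^ n) := by
  have hw0 := hw.pos_of_nonneg le_rfl
  rcases hr.eq_or_lt with rfl | hr
  · refine ⟨0, w 0, hw0.le, fun s hs => by simpa using hw.mono_of_nonneg le_rfl hs, ?_⟩
    simpa [div_mul_cancel₀ _ hw0.ne'] using hw.mono_of_nonneg le_rfl zero_le_one
  obtain ⟨k, hk, hkw⟩ := hlc.exists_rpow_minorant hw hr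
  have hrk : 0 < r ^ k := by positivity
  have ha : 0 ≤ w r / r ^ k := div_nonneg (hw.pos_of_nonneg hr.le).le hrk.le
  have hw1 := hw.pos_of_nonneg zero_le_one
  refine ⟨⌊k⌋₊, w r / r ^ k * (w 0 / w 1), mul_nonneg ha (div_nonneg hw0.le hw1.le),
    fun s hs => hw.monomial_le_of_rpow_le ha hk hkw hs, ?_⟩
  calc w r = w r / r ^ k * r ^ k := by field_simp
    _ ≤ w r / r ^ k * ((r + 1) * r ^ ⌊k⌋₊) := by
        gcongr
        exact Real.rpow_le_add_one_mul_pow_floor hr hk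
    _ = w 1 / w 0 * (r + 1) * (w r / r ^ k * (w 0 / w 1) * r ^ ⌊k⌋₊) := by field_simp

end Weight

theorem stmt_7_general (p : ℝ) (hp : 0 < p) (w : ℝ → ℝ)
    (hw : IsWeight ⊤ w)
    (hlc : LogConvexOn ⊤ w) :
    ∃ C > 0, ∀ r : ℝ, 0 ≤ r → w r ≤ C * (r + 1) * assocP ⊤ p w r := by
  have hw0 := hw.pos_of_nonneg le_rfl
  have hw1 := hw.pos_of_nonneg zero_le_one
  refine ⟨w 1 / w 0, by positivity, fun r hr => ?_⟩
  obtain ⟨n, c, hc, hcw, hwr⟩ := hlc.exists_monomial_minorant hw hr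
  calc w r ≤ w 1 / w 0 * (r + 1) * (c * r ^ n) := hwr
    _ ≤ w 1 / w 0 * (r + 1) * assocP ⊤ p w r := by
        gcongr
        exact const_mul_pow_le_assocP hp.ne' hc hcw hr

/-- for a log-convex weight `w` on `[0,∞)`, `w(r) ≤ C (r+1) w̃_p(r)`. -/
theorem stmt_7 (p : ℝ) (hp : 0 < p) (w : ℝ → ℝ)
    (hw : IsWeight ⊤ w)
    (hgrowth : (fun r : ℝ => Real.log r) =o[atTop] (fun r => Real.log (w r)))
    (hlc : LogConvexOn ⊤ w) :
    ∃ C > 0, ∀ r : ℝ, 0 ≤ r → w r ≤ C * (r + 1) * assocP ⊤ p w r :=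
  stmt_7_general p hp w hw hlc
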